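/- arXiv:1611.07381 — 2 statements merged into one kernel-verified Lean document; each statement's English description precedes it below -/
import Mathlib

section
/- Let σ be a signature with highest weight λ. Then σ is essential if and only if there exists ω ∈ V(λ)* such that, expanding f_ω(exp(z₁e_{−α₁})···exp(z_N e_{−α_N})) = Σ_{(p₁,…,p_N)} (∏ zᵢ^{pᵢ}) ⟨ω, v(λ; p₁,…,p_N)⟩ as a polynomial in z₁,…,z_N, the least monomial with nonzero coefficient (with respect to the chosen monomial order on ℤ_{≥0}ᴺ) is ∏ zᵢ^{pᵢ(σ)}. -/
/-- The vector `v(λ; p) = (e_{−α₁}^{p₁}/p₁!) ⋯ (e_{−α_N}^{p_N}/p_N!) · v_λ`,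
where `f i` is the lowering operator `e_{−αᵢ}` acting on `V(λ)` and `vl = v_λ`. -/
noncomputable def vsig (N : ℕ) (V : Type*) [AddCommGroup V] [Module ℂ V]
    (f : Fin N → Module.End ℂ V) (vl : V) (p : Fin N → ℕ) : V :=
  (((List.finRange N).map
    (fun i => (((p i).factorial : ℂ))⁻¹ • (f i ^ (p i)))).prod : Module.End ℂ V) vl

/-- A signature `σ = (λ; p₀)` is essential if and only if
there exists `ω ∈ V(λ)*` such that in the expansion
`f_ω(exp(z₁e_{−α₁})⋯exp(z_N e_{−α_N})) = Σ_p (∏ zᵢ^{pᵢ}) ⟨ω, v(λ; p)⟩`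
the least monomial with nonzero coefficient (w.r.t. the monomial order `lt`)
is `∏ zᵢ^{p₀ᵢ}`; i.e. `ω (v(λ; p₀)) ≠ 0` and every exponent `q ≠ p₀` with
`ω (v(λ; q)) ≠ 0` satisfies `lt p₀ q`.  Here `lt` is a translation-invariant
well-founded linear order (a monomial order) on exponent tuples, and
`v(λ; ·)` spans `V(λ)`. -/
theorem stmt_12 (N : ℕ)
    (lt : (Fin N → ℕ) → (Fin N → ℕ) → Prop)
    (htrans : Transitive lt) (hirr : ∀ a, ¬ lt a a)
    (htotal : ∀ a b, a ≠ b → lt a b ∨ lt b a)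
    (hadd : ∀ a b c, lt a b → lt (a + c) (b + c))
    (hwf : WellFounded lt)
    (V : Type*) [AddCommGroup V] [Module ℂ V] [FiniteDimensional ℂ V]
    (f : Fin N → Module.End ℂ V) (vl : V)
    (hspan : Submodule.span ℂ (Set.range (vsig N V f vl)) = ⊤)
    (p₀ : Fin N → ℕ) :
    (vsig N V f vl p₀ ∉
      Submodule.span ℂ {x | ∃ q, lt q p₀ ∧ x = vsig N V f vl q}) ↔
    ∃ ω : V →ₗ[ℂ] ℂ, ω (vsig N V f vl p₀) ≠ 0 ∧
      ∀ q, ω (vsig N V f vl q) ≠ 0 → q = p₀ ∨ lt p₀ q := by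
  set W := Submodule.span ℂ {x | ∃ q, lt q p₀ ∧ x = vsig N V f vl q}
  constructor
  · intro hx
    obtain ⟨ω, hω1, hω2⟩ := W.exists_dual_map_eq_bot_of_notMem hx inferInstance
    refine ⟨ω, hω1, fun q hq => ?_⟩
    by_contra h
    push_neg at h
    obtain ⟨hne, hnlt⟩ := h
    rcases htotal q p₀ hne with h' | h'
    · apply hq
      have : vsig N V f vl q ∈ W := Submodule.subset_span ⟨q, h', rfl⟩
      have := Submodule.map_le_iff_le_comap.mp hω2.le this
      simpa using this
    · exact hnlt h'
  · rintro ⟨ω, hω1, hω2⟩ hx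
    apply hω1
    have : W ≤ LinearMap.ker ω := by
      rw [Submodule.span_le]
      rintro x ⟨q, hq, rfl⟩
      simp only [SetLike.mem_coe, LinearMap.mem_ker]
      by_contra h
      rcases hω2 q h with rfl | h'
      · exact hirr _ hq
      · exact hirr _ (htrans h' hq)
    exact this hx
end

section
/- For D₂ (with positive roots α₁ = ε₁−ε₂, α₂ = ε₁+ε₂ and order comparing (p₂,p₁) lexicographically), the semigroup of essential signatures is exactly the set of (kω₁ + lω₂; p₁, p₂) with k, l, p₁, p₂ ∈ ℤ_{≥0}, p₁ ≤ k, p₂ ≤ l; it is generated by the essential signatures of fundamental highest weights (ω₁; 0,0), (ω₁; 1,0), (ω₂; 0,0), (ω₂; 0,1), each element has a unique such decomposition, and the semigroup is saturated in ℤ² ⊕ ℤ². -/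
open scoped TensorProduct

/-- The lowering operator of the `(m+1)`-dimensional irreducible `sl₂`-module:
`f · vᵢ = v_{i+1}`. -/
def lowerOp (m : ℕ) : Module.End ℂ (Fin (m + 1) → ℂ) where
  toFun v i := if h : i.val = 0 then 0 else v ⟨i.val - 1, by omega⟩
  map_add' x y := by funext i; by_cases h : i = 0 <;> simp [h]
  map_smul' c x := by funext i; by_cases h : i = 0 <;> simp [h]

/-- `e_{−α₁} = f ⊗ 1` acting on `V(kω₁+lω₂) ≅ V_{sl₂}(k) ⊗ V_{sl₂}(l)`. -/
noncomputable def Eneg1 (k l : ℕ) :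
    Module.End ℂ ((Fin (k + 1) → ℂ) ⊗[ℂ] (Fin (l + 1) → ℂ)) :=
  TensorProduct.map (lowerOp k) LinearMap.id

/-- `e_{−α₂} = 1 ⊗ f`. -/
noncomputable def Eneg2 (k l : ℕ) :
    Module.End ℂ ((Fin (k + 1) → ℂ) ⊗[ℂ] (Fin (l + 1) → ℂ)) :=
  TensorProduct.map LinearMap.id (lowerOp l)

/-- The vector `v(σ) = e_{−α₁}^{p₁} e_{−α₂}^{p₂} · v_λ` of the signature
`σ = (kω₁+lω₂; p₁, p₂)`. -/
noncomputable def vecD2 (k l : ℕ) (p : ℕ × ℕ) :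
    (Fin (k + 1) → ℂ) ⊗[ℂ] (Fin (l + 1) → ℂ) :=
  ((Eneg1 k l) ^ p.1 * (Eneg2 k l) ^ p.2)
    ((Pi.single 0 1 : Fin (k + 1) → ℂ) ⊗ₜ[ℂ] (Pi.single 0 1 : Fin (l + 1) → ℂ))

/-- The monomial order for `D₂`: compare the tuples `(p₂, p₁)` lexicographically. -/
def ltD2 (p q : ℕ × ℕ) : Prop := p.2 < q.2 ∨ (p.2 = q.2 ∧ p.1 < q.1)

/-- A signature `(kω₁+lω₂; p₁, p₂)` is essential if its vector is not in the span
of the vectors of smaller signatures (of the same highest weight). -/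
def EssentialD2 (k l : ℕ) (p : ℕ × ℕ) : Prop :=
  vecD2 k l p ∉ Submodule.span ℂ {x | ∃ q, ltD2 q p ∧ x = vecD2 k l q}

/-!
In `V(k) ⊗ V(l)` the vector of the signature `(kω₁+lω₂; p₁, p₂)` is `f^{p₁}v₀ ⊗ f^{p₂}v₀`,
which is the weight basis vector `e_{p₁} ⊗ e_{p₂}` when `p₁ ≤ k` and `p₂ ≤ l` and zero
otherwise. Distinct signatures in this box thus give distinct basis vectors, so exactly these
are essential; the statements about the semigroup are then linear arithmetic on
`(k, l, p₁, p₂) = (k - p₁)(ω₁;0,0) + p₁(ω₁;1,0) + (l - p₂)(ω₂;0,0) + p₂(ω₂;0,1)`.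
-/

lemma lowerOp_single (m i : ℕ) (hi : i ≤ m) :
    lowerOp m (Pi.single ⟨i, by omega⟩ 1) =
      if h : i + 1 ≤ m then Pi.single ⟨i + 1, by omega⟩ 1 else 0 := by
  funext j
  have hj := j.isLt
  simp only [lowerOp, LinearMap.coe_mk, AddHom.coe_mk]
  split_ifs <;> simp only [Pi.single_apply, Fin.ext_iff, Pi.zero_apply] <;>
    split_ifs <;> first | rfl | omega

lemma lowerOp_pow_single_zero (m p : ℕ) :
    (lowerOp m ^ p) (Pi.single 0 1) =
      if h : p ≤ m then Pi.single ⟨p, by omega⟩ 1 else 0 := by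
  induction p with
  | zero => rfl
  | succ p ih =>
    rw [pow_succ', Module.End.mul_apply, ih]
    by_cases hp : p ≤ m
    · rw [dif_pos hp, lowerOp_single m p hp]
    · rw [dif_neg hp, dif_neg (by omega), map_zero]

lemma vecD2_eq_tmul (k l : ℕ) (p : ℕ × ℕ) :
    vecD2 k l p = (lowerOp k ^ p.1) (Pi.single 0 1) ⊗ₜ[ℂ] (lowerOp l ^ p.2) (Pi.single 0 1) := by
  rw [vecD2, Eneg1, Eneg2, TensorProduct.map_pow, TensorProduct.map_pow, ← TensorProduct.map_mul]
  simp

noncomputable def weightBasis (k l : ℕ) :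
    Module.Basis (Fin (k + 1) × Fin (l + 1)) ℂ ((Fin (k + 1) → ℂ) ⊗[ℂ] (Fin (l + 1) → ℂ)) :=
  (Pi.basisFun ℂ (Fin (k + 1))).tensorProduct (Pi.basisFun ℂ (Fin (l + 1)))

lemma vecD2_of_le {k l p₁ p₂ : ℕ} (h₁ : p₁ ≤ k) (h₂ : p₂ ≤ l) :
    vecD2 k l (p₁, p₂) = weightBasis k l (⟨p₁, by omega⟩, ⟨p₂, by omega⟩) := by
  rw [vecD2_eq_tmul, lowerOp_pow_single_zero, lowerOp_pow_single_zero, dif_pos h₁, dif_pos h₂,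
    weightBasis, Module.Basis.tensorProduct_apply, Pi.basisFun_apply, Pi.basisFun_apply]

lemma vecD2_of_not_le {k l : ℕ} {p : ℕ × ℕ} (h : ¬(p.1 ≤ k ∧ p.2 ≤ l)) : vecD2 k l p = 0 := by
  rw [vecD2_eq_tmul, lowerOp_pow_single_zero, lowerOp_pow_single_zero]
  rcases not_and_or.mp h with h | h <;> simp [h]

lemma ltD2.ne {p q : ℕ × ℕ} (h : ltD2 p q) : p ≠ q := by
  rintro rfl
  rcases h with h | ⟨-, h⟩ <;> exact lt_irrefl _ h

theorem essentialD2_iff (k l p₁ p₂ : ℕ) : EssentialD2 k l (p₁, p₂) ↔ p₁ ≤ k ∧ p₂ ≤ l := by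
  constructor
  · intro h
    by_contra hc
    exact h (vecD2_of_not_le (p := (p₁, p₂)) hc ▸ Submodule.zero_mem _)
  · rintro ⟨h₁, h₂⟩ hmem
    set i : Fin (k + 1) × Fin (l + 1) := (⟨p₁, by omega⟩, ⟨p₂, by omega⟩)
    have hsmaller : Submodule.span ℂ {x | ∃ q, ltD2 q (p₁, p₂) ∧ x = vecD2 k l q} ≤
        Submodule.span ℂ (weightBasis k l '' {j | j ≠ i}) := by
      rw [Submodule.span_le]
      rintro x ⟨q, hq, rfl⟩
      by_cases hr : q.1 ≤ k ∧ q.2 ≤ l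
      · refine Submodule.subset_span
          ⟨(⟨q.1, by omega⟩, ⟨q.2, by omega⟩), ?_, (vecD2_of_le hr.1 hr.2).symm⟩
        have := hq.ne
        simp_all [i, Prod.ext_iff]
      · rw [vecD2_of_not_le hr]
        exact Submodule.zero_mem _
    rw [vecD2_of_le h₁ h₂] at hmem
    exact (weightBasis k l).linearIndependent.notMem_span_image (x := i) (by simp)
      (hsmaller hmem)

def fundamentalSum (a b c d : ℕ) : ℕ × ℕ × ℕ × ℕ :=
  a • (1, 0, 0, 0) + b • (1, 0, 1, 0) + c • (0, 1, 0, 0) + d • (0, 1, 0, 1)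

lemma fundamentalSum_eq (a b c d : ℕ) : fundamentalSum a b c d = (a + b, c + d, b, d) := by
  simp [fundamentalSum]

lemma fundamentalSum_inj {a b c d a' b' c' d' : ℕ}
    (h : fundamentalSum a b c d = fundamentalSum a' b' c' d') :
    a = a' ∧ b = b' ∧ c = c' ∧ d = d' := by
  simp only [fundamentalSum_eq, Prod.mk.injEq] at h
  omega

def boxSemigroup : AddSubmonoid (ℕ × ℕ × ℕ × ℕ) where
  carrier := {x | x.2.2.1 ≤ x.1 ∧ x.2.2.2 ≤ x.2.1}
  add_mem' hx hy := ⟨add_le_add hx.1 hy.1, add_le_add hx.2 hy.2⟩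
  zero_mem' := ⟨le_rfl, le_rfl⟩

lemma closure_fundamental_eq_boxSemigroup :
    AddSubmonoid.closure
        ({(1, 0, 0, 0), (1, 0, 1, 0), (0, 1, 0, 0), (0, 1, 0, 1)} : Set (ℕ × ℕ × ℕ × ℕ)) =
      boxSemigroup := by
  apply le_antisymm
  · rw [AddSubmonoid.closure_le]
    rintro x (rfl | rfl | rfl | rfl) <;> simp [boxSemigroup]
  · rintro ⟨k, l, p₁, p₂⟩ ⟨h₁ : p₁ ≤ k, h₂ : p₂ ≤ l⟩
    have hx : (k, l, p₁, p₂) = fundamentalSum (k - p₁) p₁ (l - p₂) p₂ := by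
      rw [fundamentalSum_eq, Prod.mk.injEq, Prod.mk.injEq, Prod.mk.injEq]
      omega
    rw [hx, fundamentalSum]
    refine add_mem (add_mem (add_mem ?_ ?_) ?_) ?_ <;>
      exact AddSubmonoid.nsmul_mem _ (AddSubmonoid.subset_closure (by simp)) _

def boxCone (x : ℤ × ℤ × ℤ × ℤ) : Prop :=
  0 ≤ x.2.2.1 ∧ x.2.2.1 ≤ x.1 ∧ 0 ≤ x.2.2.2 ∧ x.2.2.2 ≤ x.2.1

lemma boxCone_of_smul {x : ℤ × ℤ × ℤ × ℤ} {m : ℤ} (hm : 0 < m) (h : boxCone (m • x)) :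
    boxCone x := by
  obtain ⟨h₁, h₂, h₃, h₄⟩ := h
  exact ⟨nonneg_of_mul_nonneg_right h₁ hm, le_of_mul_le_mul_left h₂ hm,
    nonneg_of_mul_nonneg_right h₃ hm, le_of_mul_le_mul_left h₄ hm⟩

/-- For `D₂`: the semigroup of essential signatures
`(kω₁+lω₂; p₁, p₂)` is exactly `{p₁ ≤ k ∧ p₂ ≤ l}`; it is generated by the
essential signatures of fundamental highest weights `(ω₁;0,0)`, `(ω₁;1,0)`,
`(ω₂;0,0)`, `(ω₂;0,1)`; the decomposition is unique; and the semigroup is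
saturated in `ℤ² ⊕ ℤ²`.  Tuples are recorded as `(k, l, p₁, p₂)`. -/
theorem stmt_17 :
    (∀ k l p₁ p₂ : ℕ, EssentialD2 k l (p₁, p₂) ↔ (p₁ ≤ k ∧ p₂ ≤ l)) ∧
    (∀ x : ℕ × ℕ × ℕ × ℕ,
      x ∈ AddSubmonoid.closure
          ({(1, 0, 0, 0), (1, 0, 1, 0), (0, 1, 0, 0), (0, 1, 0, 1)} :
            Set (ℕ × ℕ × ℕ × ℕ)) ↔
        (x.2.2.1 ≤ x.1 ∧ x.2.2.2 ≤ x.2.1)) ∧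
    (∀ a b c d a' b' c' d' : ℕ,
      a • ((1, 0, 0, 0) : ℕ × ℕ × ℕ × ℕ) + b • (1, 0, 1, 0) +
          c • (0, 1, 0, 0) + d • (0, 1, 0, 1) =
        a' • ((1, 0, 0, 0) : ℕ × ℕ × ℕ × ℕ) + b' • (1, 0, 1, 0) +
          c' • (0, 1, 0, 0) + d' • (0, 1, 0, 1) →
      a = a' ∧ b = b' ∧ c = c' ∧ d = d') ∧
    (∀ (x : ℤ × ℤ × ℤ × ℤ) (m : ℕ), 0 < m →
      (0 ≤ ((m : ℤ) • x).2.2.1 ∧ ((m : ℤ) • x).2.2.1 ≤ ((m : ℤ) • x).1 ∧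
        0 ≤ ((m : ℤ) • x).2.2.2 ∧ ((m : ℤ) • x).2.2.2 ≤ ((m : ℤ) • x).2.1) →
      (0 ≤ x.2.2.1 ∧ x.2.2.1 ≤ x.1 ∧ 0 ≤ x.2.2.2 ∧ x.2.2.2 ≤ x.2.1)) := by
  exact ⟨essentialD2_iff, SetLike.ext_iff.mp closure_fundamental_eq_boxSemigroup,
    fun _ _ _ _ _ _ _ _ h => fundamentalSum_inj h,
    fun _ _ hm h => boxCone_of_smul (by exact_mod_cast hm) h⟩
end
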